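/- arXiv:2604.11254 — 2 statements merged into one kernel-verified Lean document; each statement's English description precedes it below -/
import Mathlib

section
/- Symmetry of the cusp-free model d_c (Proposition 1, second part): If the cost function C is antipodally symmetric, then d_c([p₀],[p₁]) = d_c([p₁],[p₀]) for all classes [p₀], [p₁] in the projective line bundle, even though the underlying distance d_F₀⁺ is asymmetric. -/
open Set MeasureTheory
open scoped ENNReal

noncomputable section

/-- The orientation vector `n(θ) = (cos θ, sin θ)`. -/
def nvec (θ : ℝ) : ℝ × ℝ := (Real.cos θ, Real.sin θ)

/-- Euclidean dot product on `ℝ × ℝ`. -/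
def dot (a b : ℝ × ℝ) : ℝ := a.1 * b.1 + a.2 * b.2

/-- Euclidean norm on `ℝ × ℝ`. -/
def enorm2 (v : ℝ × ℝ) : ℝ := Real.sqrt (v.1 ^ 2 + v.2 ^ 2)

/-- A point of the space of positions and orientations: a position in `ℝ²`
together with an orientation vector in `ℝ²` (intended to be a unit vector). -/
abbrev Pt := (ℝ × ℝ) × (ℝ × ℝ)

/-- The antipode `p̄ = (x, -n)` of a point `p = (x, n)`. -/
def antipode (p : Pt) : Pt := (p.1, -p.2)

/-- A candidate curve, given by a spatial part `x` and an angular part `θ`. -/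
structure Curve where
  x : ℝ → ℝ × ℝ
  th : ℝ → ℝ

/-- A map is piecewise continuously differentiable on `[0,1]`: it is continuous
on `[0,1]` and, off a finite set, differentiable with continuous derivative. -/
def PiecewiseC1 {E : Type*} [NormedAddCommGroup E] [NormedSpace ℝ E] (f : ℝ → E) : Prop :=
  ContinuousOn f (Icc 0 1) ∧
    ∃ s : Finset ℝ, ∀ t ∈ Icc (0 : ℝ) 1 \ (s : Set ℝ),
      DifferentiableAt ℝ f t ∧ ContinuousAt (deriv f) t

namespace Curve

/-- Both components of the curve are piecewise `C¹`. -/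
def Admissible (γ : Curve) : Prop := PiecewiseC1 γ.x ∧ PiecewiseC1 γ.th

/-- The spatial control `u¹(t) = ẋ(t) ⬝ n(θ(t))`. -/
def u1 (γ : Curve) (t : ℝ) : ℝ := dot (deriv γ.x t) (nvec (γ.th t))

/-- The angular control `u³(t) = θ̇(t)`. -/
def u3 (γ : Curve) (t : ℝ) : ℝ := deriv γ.th t

/-- Horizontality: wherever the spatial derivative exists,
`ẋ(t) ∈ span {n(θ(t))}`. -/
def Horizontal (γ : Curve) : Prop :=
  ∀ t ∈ Icc (0 : ℝ) 1, DifferentiableAt ℝ γ.x t →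
    ∃ c : ℝ, deriv γ.x t = c • nvec (γ.th t)

/-- Boundary conditions: the curve joins `p₀` to `p₁` (the angular boundary
conditions hold modulo `2π`, which is expressed via the orientation vectors). -/
def Joins (γ : Curve) (p₀ p₁ : Pt) : Prop :=
  γ.x 0 = p₀.1 ∧ γ.x 1 = p₁.1 ∧ nvec (γ.th 0) = p₀.2 ∧ nvec (γ.th 1) = p₁.2

end Curve

/-- The length `L(γ) = ∫₀¹ C(x(t), n(θ(t))) √(ξ² u¹(t)² + u³(t)²) dt`. -/
def length (ξ : ℝ) (C : Pt → ℝ) (γ : Curve) : ℝ :=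
  ∫ t in (0 : ℝ)..1,
    C (γ.x t, nvec (γ.th t)) * Real.sqrt (ξ ^ 2 * γ.u1 t ^ 2 + γ.u3 t ^ 2)

/-- `Γ₀(p₀,p₁)`: horizontal admissible candidate curves from `p₀` to `p₁`. -/
def Gamma0 (p₀ p₁ : Pt) : Set Curve :=
  {γ | γ.Admissible ∧ γ.Horizontal ∧ γ.Joins p₀ p₁}

/-- `Γ₀⁺(p₀,p₁)`: members of `Γ₀(p₀,p₁)` with `u¹ ≥ 0` wherever defined. -/
def Gamma0plus (p₀ p₁ : Pt) : Set Curve :=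
  {γ ∈ Gamma0 p₀ p₁ | ∀ t ∈ Icc (0 : ℝ) 1, DifferentiableAt ℝ γ.x t → 0 ≤ γ.u1 t}

/-- `Γ₀⁻(p₀,p₁)`: members of `Γ₀(p₀,p₁)` with `u¹ ≤ 0` wherever defined. -/
def Gamma0minus (p₀ p₁ : Pt) : Set Curve :=
  {γ ∈ Gamma0 p₀ p₁ | ∀ t ∈ Icc (0 : ℝ) 1, DifferentiableAt ℝ γ.x t → γ.u1 t ≤ 0}

/-- The sub-Riemannian distance `d_F₀` (with `inf ∅ = +∞`). -/
def dF0 (ξ : ℝ) (C : Pt → ℝ) (p₀ p₁ : Pt) : ℝ≥0∞ :=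
  ⨅ γ ∈ Gamma0 p₀ p₁, ENNReal.ofReal (length ξ C γ)

/-- The forward (asymmetric) Finsler distance `d_F₀⁺` (with `inf ∅ = +∞`). -/
def dF0plus (ξ : ℝ) (C : Pt → ℝ) (p₀ p₁ : Pt) : ℝ≥0∞ :=
  ⨅ γ ∈ Gamma0plus p₀ p₁, ENNReal.ofReal (length ξ C γ)

/-- The backward Finsler distance `d_F₀⁻` (with `inf ∅ = +∞`). -/
def dF0minus (ξ : ℝ) (C : Pt → ℝ) (p₀ p₁ : Pt) : ℝ≥0∞ :=
  ⨅ γ ∈ Gamma0minus p₀ p₁, ENNReal.ofReal (length ξ C γ)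

/-- The cusp-free model `d_c` on the projective line bundle:
the minimum of `d_F₀⁺` over representatives `q₀ ∈ [p₀] = {p₀, p̄₀}` and
`q₁ ∈ [p₁] = {p₁, p̄₁}`. -/
def dc (ξ : ℝ) (C : Pt → ℝ) (p₀ p₁ : Pt) : ℝ≥0∞ :=
  min (min (dF0plus ξ C p₀ p₁) (dF0plus ξ C p₀ (antipode p₁)))
      (min (dF0plus ξ C (antipode p₀) p₁) (dF0plus ξ C (antipode p₀) (antipode p₁)))

/-- The projective line bundle model `d_proj`:
the minimum of `d_F₀` over representatives of the classes. -/
def dproj (ξ : ℝ) (C : Pt → ℝ) (p₀ p₁ : Pt) : ℝ≥0∞ :=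
  min (min (dF0 ξ C p₀ p₁) (dF0 ξ C p₀ (antipode p₁)))
      (min (dF0 ξ C (antipode p₀) p₁) (dF0 ξ C (antipode p₀) (antipode p₁)))

/-- `Γᶜ([p₀],[p₁])`: curves between representatives of the two classes whose
spatial control has a constant sign (nonnegative or nonpositive everywhere). -/
def GammaC (p₀ p₁ : Pt) : Set Curve :=
  (Gamma0plus p₀ p₁ ∪ Gamma0minus p₀ p₁) ∪
  (Gamma0plus p₀ (antipode p₁) ∪ Gamma0minus p₀ (antipode p₁)) ∪
  (Gamma0plus (antipode p₀) p₁ ∪ Gamma0minus (antipode p₀) p₁) ∪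
  (Gamma0plus (antipode p₀) (antipode p₁) ∪ Gamma0minus (antipode p₀) (antipode p₁))

/-- The cost function `C` is antipodally symmetric. -/
def AntipodallySymmetric (C : Pt → ℝ) : Prop :=
  ∀ x n : ℝ × ℝ, C (x, n) = C (x, -n)

/-- Distance on the circle: `ρ(θ₀, θ₁) = min_{k ∈ ℤ} |θ₁ - θ₀ + 2πk|`. -/
def rho (θ₀ θ₁ : ℝ) : ℝ :=
  sInf (Set.range fun k : ℤ => |θ₁ - θ₀ + 2 * Real.pi * k|)

/-! ### Auxiliary lemmas for the symmetry proof -/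

lemma antipode_antipode (p : Pt) : antipode (antipode p) = p := by
  simp [antipode]

lemma nvec_add_pi (θ : ℝ) : nvec (θ + Real.pi) = - nvec θ := by
  show (_, _) = (-Real.cos θ, -Real.sin θ)
  rw [Real.cos_add_pi, Real.sin_add_pi]

/-- The reversed (and orientation-flipped) curve. -/
def revCurve (γ : Curve) : Curve :=
  ⟨fun t => γ.x (1 - t), fun t => γ.th (1 - t) + Real.pi⟩

lemma deriv_revCurve_x (γ : Curve) (t : ℝ) :
    deriv (revCurve γ).x t = - deriv γ.x (1 - t) :=
  deriv_comp_const_sub γ.x 1 t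

lemma deriv_revCurve_th (γ : Curve) (t : ℝ) :
    deriv (revCurve γ).th t = - deriv γ.th (1 - t) := by
  have : (revCurve γ).th = fun t => (fun s => γ.th (1 - s)) t + Real.pi := rfl
  rw [this, deriv_add_const]
  exact deriv_comp_const_sub γ.th 1 t

lemma u1_revCurve (γ : Curve) (t : ℝ) : (revCurve γ).u1 t = γ.u1 (1 - t) := by
  unfold Curve.u1
  rw [deriv_revCurve_x]
  show dot _ (nvec (γ.th (1 - t) + Real.pi)) = _
  rw [nvec_add_pi]
  show -(deriv γ.x (1 - t)).1 * -(nvec (γ.th (1 - t))).1 +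
      -(deriv γ.x (1 - t)).2 * -(nvec (γ.th (1 - t))).2 = dot _ _
  unfold dot
  ring

lemma u3_revCurve (γ : Curve) (t : ℝ) : (revCurve γ).u3 t = - γ.u3 (1 - t) := by
  unfold Curve.u3
  exact deriv_revCurve_th γ t

lemma piecewiseC1_comp_one_sub {E : Type*} [NormedAddCommGroup E] [NormedSpace ℝ E]
    {f : ℝ → E} (hf : PiecewiseC1 f) : PiecewiseC1 (fun t => f (1 - t)) := by
  obtain ⟨hcont, s, hs⟩ := hf
  constructor
  · refine hcont.comp ((continuousOn_const).sub continuousOn_id) ?_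
    intro t ht
    exact ⟨by simpa using ht.2, by simpa using ht.1⟩
  · refine ⟨s.image (fun x => 1 - x), fun t ht => ?_⟩
    have h1t : (1 - t) ∈ Icc (0:ℝ) 1 \ (s : Set ℝ) := by
      constructor
      · exact ⟨by simpa using ht.1.2, by simpa using ht.1.1⟩
      · intro hmem
        exact ht.2 (by
          simp only [Finset.coe_image, Set.mem_image]
          exact ⟨1 - t, hmem, by ring⟩)
    obtain ⟨hdiff, hcd⟩ := hs _ h1t
    constructor
    · exact differentiableAt_comp_const_sub.2 hdiff
    · have heq : deriv (fun t => f (1 - t)) = fun t => - deriv f (1 - t) := by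
        funext u; exact deriv_comp_const_sub f 1 u
      rw [heq]
      exact ((hcd.comp (by fun_prop : ContinuousAt (fun u : ℝ => 1 - u) t)).neg)

lemma piecewiseC1_add_const {f : ℝ → ℝ} (c : ℝ) (hf : PiecewiseC1 f) :
    PiecewiseC1 (fun t => f t + c) := by
  obtain ⟨hcont, s, hs⟩ := hf
  refine ⟨hcont.add continuousOn_const, s, fun t ht => ?_⟩
  obtain ⟨hdiff, hcd⟩ := hs t ht
  refine ⟨hdiff.add_const c, ?_⟩
  have heq : deriv (fun t => f t + c) = deriv f := deriv_add_const' c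
  rw [heq]; exact hcd

lemma revCurve_mem (ξ : ℝ) {C : Pt → ℝ} (hsym : AntipodallySymmetric C)
    {a b : Pt} {γ : Curve} (hγ : γ ∈ Gamma0plus a b) :
    revCurve γ ∈ Gamma0plus (antipode b) (antipode a) ∧
      length ξ C (revCurve γ) = length ξ C γ := by
  obtain ⟨⟨⟨hax, hath⟩, hhor, hj⟩, hu1⟩ := hγ
  have hdx : ∀ t : ℝ, DifferentiableAt ℝ (revCurve γ).x t → DifferentiableAt ℝ γ.x (1 - t) :=
    fun t h => differentiableAt_comp_const_sub.1 h
  constructor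
  · refine ⟨⟨⟨piecewiseC1_comp_one_sub hax, piecewiseC1_add_const Real.pi
        (piecewiseC1_comp_one_sub hath)⟩, ?_, ?_⟩, ?_⟩
    · -- horizontal
      intro t ht hd
      have h1t : (1 - t) ∈ Icc (0:ℝ) 1 := ⟨by simpa using ht.2, by simpa using ht.1⟩
      obtain ⟨c, hc⟩ := hhor (1 - t) h1t (hdx t hd)
      refine ⟨c, ?_⟩
      rw [deriv_revCurve_x, hc]
      show _ = c • nvec (γ.th (1 - t) + Real.pi)
      rw [nvec_add_pi, smul_neg]
    · -- joins
      obtain ⟨h0, h1, hn0, hn1⟩ := hj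
      refine ⟨?_, ?_, ?_, ?_⟩
      · show γ.x (1 - 0) = b.1; simpa using h1
      · show γ.x (1 - 1) = a.1; simpa using h0
      · show nvec (γ.th (1 - 0) + Real.pi) = -b.2
        rw [nvec_add_pi]; simp only [sub_zero]; rw [hn1]
      · show nvec (γ.th (1 - 1) + Real.pi) = -a.2
        rw [nvec_add_pi]; simp only [sub_self]; rw [hn0]
    · -- sign of u1
      intro t ht hd
      rw [u1_revCurve]
      exact hu1 (1 - t) ⟨by simpa using ht.2, by simpa using ht.1⟩ (hdx t hd)
  · -- length
    unfold length
    have hpt : ∀ t : ℝ,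
        C ((revCurve γ).x t, nvec ((revCurve γ).th t)) *
          Real.sqrt (ξ ^ 2 * (revCurve γ).u1 t ^ 2 + (revCurve γ).u3 t ^ 2)
        = C (γ.x (1 - t), nvec (γ.th (1 - t))) *
          Real.sqrt (ξ ^ 2 * γ.u1 (1 - t) ^ 2 + γ.u3 (1 - t) ^ 2) := by
      intro t
      have h1 : ((revCurve γ).x t, nvec ((revCurve γ).th t))
          = (γ.x (1 - t), nvec (γ.th (1 - t) + Real.pi)) := rfl
      rw [h1, nvec_add_pi, ← hsym, u1_revCurve, u3_revCurve, neg_pow]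
      ring_nf
    calc (∫ t in (0:ℝ)..1,
          C ((revCurve γ).x t, nvec ((revCurve γ).th t)) *
            Real.sqrt (ξ ^ 2 * (revCurve γ).u1 t ^ 2 + (revCurve γ).u3 t ^ 2))
        = ∫ t in (0:ℝ)..1,
            (fun s => C (γ.x s, nvec (γ.th s)) *
              Real.sqrt (ξ ^ 2 * γ.u1 s ^ 2 + γ.u3 s ^ 2)) (1 - t) := by
          simp only [hpt]
      _ = ∫ t in (1-1:ℝ)..(1-0:ℝ), C (γ.x t, nvec (γ.th t)) *
            Real.sqrt (ξ ^ 2 * γ.u1 t ^ 2 + γ.u3 t ^ 2) :=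
          intervalIntegral.integral_comp_sub_left
            (fun s => C (γ.x s, nvec (γ.th s)) *
              Real.sqrt (ξ ^ 2 * γ.u1 s ^ 2 + γ.u3 s ^ 2)) 1
      _ = ∫ t in (0:ℝ)..1, C (γ.x t, nvec (γ.th t)) *
            Real.sqrt (ξ ^ 2 * γ.u1 t ^ 2 + γ.u3 t ^ 2) := by norm_num

lemma dF0plus_rev_le (ξ : ℝ) {C : Pt → ℝ} (hsym : AntipodallySymmetric C) (a b : Pt) :
    dF0plus ξ C (antipode b) (antipode a) ≤ dF0plus ξ C a b := by
  refine le_iInf₂ fun γ hγ => ?_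
  obtain ⟨hm, hl⟩ := revCurve_mem ξ hsym hγ
  calc dF0plus ξ C (antipode b) (antipode a)
      ≤ ENNReal.ofReal (length ξ C (revCurve γ)) := iInf₂_le _ hm
    _ = ENNReal.ofReal (length ξ C γ) := by rw [hl]

lemma dF0plus_rev (ξ : ℝ) {C : Pt → ℝ} (hsym : AntipodallySymmetric C) (a b : Pt) :
    dF0plus ξ C a b = dF0plus ξ C (antipode b) (antipode a) := by
  refine le_antisymm ?_ (dF0plus_rev_le ξ hsym a b)
  have := dF0plus_rev_le ξ hsym (antipode b) (antipode a)
  rwa [antipode_antipode, antipode_antipode] at this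

lemma min4_perm (a b c d : ℝ≥0∞) :
    min (min a b) (min c d) = min (min d b) (min c a) := by
  rw [min_comm d b, min_comm c a, min_min_min_comm, min_comm (min a c) (min b d)]

/-- symmetry of the cusp-free model `d_c`. -/
theorem dc_symm (ξ δ : ℝ) (hξ : 0 < ξ) (hδ : 0 < δ)
    (C : Pt → ℝ) (hC : Continuous C) (hCδ : ∀ q, δ ≤ C q)
    (hsym : AntipodallySymmetric C) (p₀ p₁ : Pt) :
    dc ξ C p₀ p₁ = dc ξ C p₁ p₀ := by
  unfold dc
  rw [dF0plus_rev ξ hsym p₀ p₁, dF0plus_rev ξ hsym p₀ (antipode p₁),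
    dF0plus_rev ξ hsym (antipode p₀) p₁, dF0plus_rev ξ hsym (antipode p₀) (antipode p₁),
    antipode_antipode, antipode_antipode]
  exact min4_perm _ _ _ _

end
end

section
/- Local controllability of d_proj in the lateral direction (vanishing length of the geodesics in Fig. 4): For the constant cost C ≡ 1, let p₀ := ((0,0), (1,0)) and, for ε > 0, p₁^ε := ((0, ε), (1,0)). Then for every α ∈ (0, π/2] one has d_proj([p₀],[p₁^ε]) ≤ d_F₀(p₀, p₁^ε) ≤ 4α + ξ·ε / sin α. In particular d_proj([p₀],[p₁^ε]) → 0 as ε ↓ 0, in contrast to d_c which stays bounded below by π. -/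
open Set MeasureTheory
open scoped ENNReal

noncomputable section

/-!
The bound is realised by a five-stage manoeuvre (Fig. 4): turn on the spot by `α`, drive forward
a distance `r` along `n(α)`, turn on the spot by `-2α`, drive backward a distance `r` along
`n(-α)`, and turn back by `α`. It ends at `(0, 2 r sin α)` with the initial orientation and has
length `α + ξ r + 2α + ξ r + α`, which for `r = ε / (2 sin α)` is `4α + ξ ε / sin α`. Each stage
is driven by a rescaled copy of `Real.smoothTransition`, so the curve is smooth and at every time
at most one control is nonzero; the length integrand is then the derivative of
`ξ r · (distance driven) + α · (angle turned)`. Taking `α = √ε` and Jordan's inequality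
`sin α ≥ 2α/π` gives `d_proj ≤ (4 + πξ/2) √ε`, hence the limit.
-/

lemma dproj_le_dF0 (ξ : ℝ) (C : Pt → ℝ) (p₀ p₁ : Pt) : dproj ξ C p₀ p₁ ≤ dF0 ξ C p₀ p₁ :=
  (min_le_left _ _).trans (min_le_left _ _)

lemma PiecewiseC1.of_contDiff {E : Type*} [NormedAddCommGroup E] [NormedSpace ℝ E] {f : ℝ → E}
    (hf : ContDiff ℝ 1 f) : PiecewiseC1 f :=
  ⟨hf.continuous.continuousOn, ∅, fun t _ =>
    ⟨hf.differentiable one_ne_zero t, (hf.continuous_deriv le_rfl).continuousAt⟩⟩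

lemma dot_smul_nvec_self (c θ : ℝ) : dot (c • nvec θ) (nvec θ) = c := by
  simp only [dot, nvec, Prod.smul_mk, smul_eq_mul]
  linear_combination c * Real.sin_sq_add_cos_sq θ

namespace LateralManeuver

open Real

def step (k t : ℝ) : ℝ := smoothTransition (5 * t - k)

lemma contDiff_step (k : ℝ) : ContDiff ℝ 1 (step k) :=
  smoothTransition.contDiff.comp (by fun_prop)

lemma differentiable_step (k : ℝ) : Differentiable ℝ (step k) :=
  (contDiff_step k).differentiable one_ne_zero

lemma continuous_deriv_step (k : ℝ) : Continuous (deriv (step k)) :=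
  (contDiff_step k).continuous_deriv le_rfl

lemma monotone_step (k : ℝ) : Monotone (step k) :=
  fun _ _ h => smoothTransition.monotone (by linarith)

lemma step_of_le {k t : ℝ} (h : 5 * t ≤ k) : step k t = 0 :=
  smoothTransition.zero_of_nonpos (by linarith)

lemma step_of_ge {k t : ℝ} (h : k + 1 ≤ 5 * t) : step k t = 1 :=
  smoothTransition.one_of_one_le (by linarith)

lemma step_zero {k : ℝ} (hk : 0 ≤ k) : step k 0 = 0 := step_of_le (by linarith)

lemma step_one {k : ℝ} (hk : k ≤ 4) : step k 1 = 1 := step_of_ge (by linarith)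

lemma deriv_step_nonneg (k t : ℝ) : 0 ≤ deriv (step k) t :=
  (monotone_step k).deriv_nonneg

lemma deriv_step_ne_zero {k t : ℝ} (h : deriv (step k) t ≠ 0) : k < 5 * t ∧ 5 * t < k + 1 := by
  by_contra! hout
  refine h ?_
  -- where `step k` equals `0` or `1` it attains its global minimum or maximum
  rcases le_or_gt (5 * t) k with hle | hgt
  · refine IsLocalMin.deriv_eq_zero (Filter.Eventually.of_forall fun s => ?_)
    rw [step_of_le hle]
    exact smoothTransition.nonneg _
  · refine IsLocalMax.deriv_eq_zero (Filter.Eventually.of_forall fun s => ?_)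
    rw [step_of_ge (hout hgt)]
    exact smoothTransition.le_one _

lemma deriv_step_mul_deriv_step {j k : ℝ} (hjk : j + 1 ≤ k) (t : ℝ) :
    deriv (step j) t * deriv (step k) t = 0 := by
  by_contra h
  have hj := deriv_step_ne_zero (left_ne_zero_of_mul h)
  have hk := deriv_step_ne_zero (right_ne_zero_of_mul h)
  linarith [hj.2, hk.1]

def maneuver (r α : ℝ) : Curve where
  x t := (r * step 1 t) • nvec α - (r * step 3 t) • nvec (-α)
  th t := α * (step 0 t - 2 * step 2 t + step 4 t)

variable (r α : ℝ)

lemma contDiff_maneuver_x : ContDiff ℝ 1 (maneuver r α).x :=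
  ((contDiff_const.mul (contDiff_step 1)).smul contDiff_const).sub
    ((contDiff_const.mul (contDiff_step 3)).smul contDiff_const)

lemma contDiff_maneuver_th : ContDiff ℝ 1 (maneuver r α).th :=
  contDiff_const.mul (((contDiff_step 0).sub (contDiff_const.mul (contDiff_step 2))).add
    (contDiff_step 4))

lemma deriv_maneuver_th (t : ℝ) : deriv (maneuver r α).th t =
    α * (deriv (step 0) t - 2 * deriv (step 2) t + deriv (step 4) t) := by
  have hd (k : ℝ) : DifferentiableAt ℝ (step k) t := differentiable_step k t
  exact ((((hd 0).hasDerivAt.sub ((hd 2).hasDerivAt.const_mul 2)).add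
    (hd 4).hasDerivAt).const_mul α).deriv

lemma maneuver_th_of_forward {t : ℝ} (h₁ : 1 < 5 * t) (h₂ : 5 * t < 2) :
    (maneuver r α).th t = α := by
  simp only [maneuver, step_of_ge (k := 0) (t := t) (by linarith),
    step_of_le (k := 2) (t := t) (by linarith), step_of_le (k := 4) (t := t) (by linarith)]
  ring

lemma maneuver_th_of_backward {t : ℝ} (h₁ : 3 < 5 * t) (h₂ : 5 * t < 4) :
    (maneuver r α).th t = -α := by
  simp only [maneuver, step_of_ge (k := 0) (t := t) (by linarith),
    step_of_ge (k := 2) (t := t) (by linarith), step_of_le (k := 4) (t := t) (by linarith)]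
  ring

lemma deriv_maneuver_x (t : ℝ) : deriv (maneuver r α).x t =
    (r * (deriv (step 1) t - deriv (step 3) t)) • nvec ((maneuver r α).th t) := by
  have hd (k : ℝ) : DifferentiableAt ℝ (step k) t := differentiable_step k t
  have hx : HasDerivAt (maneuver r α).x
      ((r * deriv (step 1) t) • nvec α - (r * deriv (step 3) t) • nvec (-α)) t :=
    (((hd 1).hasDerivAt.const_mul r).smul_const _).sub
      (((hd 3).hasDerivAt.const_mul r).smul_const _)
  rw [hx.deriv]
  by_cases h₁ : deriv (step 1) t = 0
  · by_cases h₃ : deriv (step 3) t = 0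
    · simp [h₁, h₃]
    · obtain ⟨h, h'⟩ := deriv_step_ne_zero h₃
      rw [h₁, maneuver_th_of_backward r α h (by linarith)]
      simp [sub_eq_add_neg, neg_smul]
  · obtain ⟨h, h'⟩ := deriv_step_ne_zero h₁
    have h₃ := deriv_step_mul_deriv_step (j := 1) (k := 3) (by norm_num) t
    rw [mul_eq_zero, or_iff_right h₁] at h₃
    rw [h₃, maneuver_th_of_forward r α h (by linarith)]
    simp

lemma maneuver_mem_Gamma0 :
    maneuver r α ∈ Gamma0 (((0, 0), (1, 0)) : Pt) ((0, 2 * r * sin α), (1, 0)) := by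
  refine ⟨⟨.of_contDiff (contDiff_maneuver_x r α), .of_contDiff (contDiff_maneuver_th r α)⟩,
    fun t _ _ => ⟨_, deriv_maneuver_x r α t⟩, ?_⟩
  refine ⟨?_, ?_, ?_, ?_⟩ <;> norm_num [maneuver, step_zero, step_one, nvec, Prod.ext_iff]
  ring

lemma maneuver_u1 (t : ℝ) : (maneuver r α).u1 t = r * (deriv (step 1) t - deriv (step 3) t) := by
  rw [Curve.u1, deriv_maneuver_x, dot_smul_nvec_self]

variable {r α} {ξ : ℝ}

lemma sqrt_maneuver_integrand (hξ : 0 ≤ ξ) (hr : 0 ≤ r) (hα : 0 ≤ α) (t : ℝ) :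
    sqrt (ξ ^ 2 * (maneuver r α).u1 t ^ 2 + (maneuver r α).u3 t ^ 2) =
      ξ * r * (deriv (step 1) t + deriv (step 3) t) +
        α * (deriv (step 0) t + 2 * deriv (step 2) t + deriv (step 4) t) := by
  have hd {j k : ℝ} (hjk : j + 1 ≤ k) := deriv_step_mul_deriv_step hjk t
  have h01 := hd (j := 0) (k := 1) (by norm_num)
  have h02 := hd (j := 0) (k := 2) (by norm_num)
  have h03 := hd (j := 0) (k := 3) (by norm_num)
  have h12 := hd (j := 1) (k := 2) (by norm_num)
  have h13 := hd (j := 1) (k := 3) (by norm_num)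
  have h14 := hd (j := 1) (k := 4) (by norm_num)
  have h23 := hd (j := 2) (k := 3) (by norm_num)
  have h24 := hd (j := 2) (k := 4) (by norm_num)
  have h34 := hd (j := 3) (k := 4) (by norm_num)
  have hnn (k : ℝ) := deriv_step_nonneg k t
  rw [maneuver_u1, Curve.u3, deriv_maneuver_th]
  rw [← sqrt_sq (add_nonneg (mul_nonneg (mul_nonneg hξ hr) (add_nonneg (hnn 1) (hnn 3)))
    (mul_nonneg hα (add_nonneg (add_nonneg (hnn 0) (mul_nonneg zero_le_two (hnn 2))) (hnn 4))))]
  congr 1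
  -- the five steps have pairwise disjoint supports, so all cross terms vanish
  linear_combination (-4 * ξ ^ 2 * r ^ 2) * h13 - 8 * α ^ 2 * (h02 + h24)
    - 2 * ξ * r * α * (h01 + 2 * h12 + h14 + h03 + 2 * h23 + h34)

lemma length_maneuver (hξ : 0 ≤ ξ) (hr : 0 ≤ r) (hα : 0 ≤ α) :
    length ξ (fun _ => 1) (maneuver r α) = 4 * α + 2 * ξ * r := by
  let F t := ξ * r * (step 1 t + step 3 t) + α * (step 0 t + 2 * step 2 t + step 4 t)
  let I t := sqrt (ξ ^ 2 * (maneuver r α).u1 t ^ 2 + (maneuver r α).u3 t ^ 2)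
  have hF (t : ℝ) : HasDerivAt F (I t) t := by
    rw [show I t = _ from sqrt_maneuver_integrand hξ hr hα t]
    have hd (k : ℝ) := (differentiable_step k t).hasDerivAt
    exact (((hd 1).add (hd 3)).const_mul _).add
      ((((hd 0).add ((hd 2).const_mul 2)).add (hd 4)).const_mul α)
  have hI : Continuous I := by
    simp_rw [I, sqrt_maneuver_integrand hξ hr hα]
    have := continuous_deriv_step
    fun_prop
  simp only [length, one_mul]
  rw [intervalIntegral.integral_eq_sub_of_hasDerivAt (fun t _ => hF t) (hI.intervalIntegrable 0 1)]
  norm_num [F, step_zero, step_one]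
  ring

lemma dF0_lateral_le {ε : ℝ} (hξ : 0 ≤ ξ) (hε : 0 ≤ ε) (hα₀ : 0 < α) (hα : α < π) :
    dF0 ξ (fun _ => 1) (((0, 0), (1, 0)) : Pt) ((0, ε), (1, 0)) ≤
      ENNReal.ofReal (4 * α + ξ * ε / sin α) := by
  have hsin : 0 < sin α := sin_pos_of_pos_of_lt_pi hα₀ hα
  set r := ε / (2 * sin α)
  have hε : ε = 2 * r * sin α := by simp only [r]; field_simp
  have hlen : length ξ (fun _ => 1) (maneuver r α) = 4 * α + ξ * ε / sin α := by
    rw [length_maneuver hξ (by positivity) hα₀.le, hε]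
    field_simp
  rw [← hlen]
  nth_rewrite 1 [hε]
  exact iInf₂_le _ (maneuver_mem_Gamma0 r α)

lemma dF0_lateral_le_sqrt {ε : ℝ} (hξ : 0 ≤ ξ) (hε₀ : 0 < ε) (hε₁ : ε ≤ 1) :
    dF0 ξ (fun _ => 1) (((0, 0), (1, 0)) : Pt) ((0, ε), (1, 0)) ≤
      ENNReal.ofReal ((4 + π * ξ / 2) * sqrt ε) := by
  have hs₀ : 0 < sqrt ε := sqrt_pos.2 hε₀
  have hs₁ : sqrt ε ≤ π / 2 := (sqrt_le_one.2 hε₁).trans (by linarith [two_le_pi])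
  refine (dF0_lateral_le hξ hε₀.le hs₀ (by linarith)).trans (ENNReal.ofReal_le_ofReal ?_)
  have jordan : ξ * ε / sin (sqrt ε) ≤ ξ * ε / (2 / π * sqrt ε) :=
    div_le_div_of_nonneg_left (by positivity) (by positivity) (mul_le_sin hs₀.le hs₁)
  have hε : ξ * ε / (2 / π * sqrt ε) = π * ξ / 2 * sqrt ε := by
    field_simp
    rw [sq_sqrt hε₀.le]
  linarith

end LateralManeuver

/-- local controllability of `d_proj` in the lateral direction. -/
theorem dproj_lateral_limit (ξ : ℝ) (hξ : 0 < ξ) :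
    (∀ ε : ℝ, 0 < ε → ∀ α : ℝ, α ∈ Ioc (0 : ℝ) (Real.pi / 2) →
      dproj ξ (fun _ => 1) (((0, 0), (1, 0)) : Pt) ((0, ε), (1, 0)) ≤
        dF0 ξ (fun _ => 1) (((0, 0), (1, 0)) : Pt) ((0, ε), (1, 0)) ∧
      dF0 ξ (fun _ => 1) (((0, 0), (1, 0)) : Pt) ((0, ε), (1, 0)) ≤
        ENNReal.ofReal (4 * α + ξ * ε / Real.sin α)) ∧
    Filter.Tendsto
      (fun ε : ℝ => dproj ξ (fun _ => 1) (((0, 0), (1, 0)) : Pt) ((0, ε), (1, 0)))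
      (nhdsWithin 0 (Ioi 0)) (nhds 0) := by
  refine ⟨fun ε hε α hα => ⟨dproj_le_dF0 .., ?_⟩, ?_⟩
  · exact LateralManeuver.dF0_lateral_le hξ.le hε.le hα.1 (by linarith [hα.2, Real.pi_pos])
  have hbound : Filter.Tendsto (fun ε => ENNReal.ofReal ((4 + Real.pi * ξ / 2) * Real.sqrt ε))
      (nhdsWithin 0 (Ioi 0)) (nhds 0) := by
    have hcont : Continuous fun ε => (4 + Real.pi * ξ / 2) * Real.sqrt ε := by fun_prop
    have h := (hcont.tendsto 0).mono_left (nhdsWithin_le_nhds (s := Ioi 0))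
    simpa using ENNReal.tendsto_ofReal h
  refine tendsto_of_tendsto_of_tendsto_of_le_of_le' tendsto_const_nhds hbound
    (.of_forall fun _ => zero_le) ?_
  filter_upwards [Ioo_mem_nhdsGT (zero_lt_one' ℝ)] with ε hε
  exact (dproj_le_dF0 ..).trans (LateralManeuver.dF0_lateral_le_sqrt hξ.le hε.1 hε.2.le)
end
end
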